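/- Let σ be a faithful state on A = End(H), let {v_j} be a finite collection of eigenvectors of Ad_σ (σv_jσ^{-1} = e^{ω_j}v_j with ω_j ∈ ℝ) that is closed under *-adjunction (i.e., for each j there is j' with v_{j'} = v_j* and ω_{j'} = -ω_j). Then the operator L₀a = Σ_j e^{ω_j/2}([v_j*,a]v_j + v_j*[a,v_j]) is self-adjoint with respect to the GNS inner product ⟨a,b⟩_σ = tr(a*σb). -/
import Mathlib


noncomputable section

open ContinuousLinearMap

/-- The algebra `A = End(H)` for `H = ℂⁿ` a finite-dimensional Hilbert space. -/
abbrev QA (n : ℕ) := EuclideanSpace ℂ (Fin n) →L[ℂ] EuclideanSpace ℂ (Fin n)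

/-- The trace of an operator on the finite-dimensional Hilbert space. -/
noncomputable def trC {n : ℕ} (a : QA n) : ℂ :=
  LinearMap.trace ℂ (EuclideanSpace ℂ (Fin n)) (a : _ →ₗ[ℂ] _)

/-- The weighted Lindblad generator `L₀ a = Σ_j e^{ω_j/2} ([v_j*, a] v_j + v_j* [a, v_j])`. -/
noncomputable def lindbladW {n N : ℕ} (v : Fin N → QA n) (ω : Fin N → ℝ) (a : QA n) : QA n :=
  ∑ j : Fin N, (Real.exp (ω j / 2) : ℂ) •
    ((ContinuousLinearMap.adjoint (v j) ∘L a - a ∘L ContinuousLinearMap.adjoint (v j)) ∘L v j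
      + ContinuousLinearMap.adjoint (v j) ∘L (a ∘L v j - v j ∘L a))

private lemma trC_mul_comm {n : ℕ} (x y : QA n) : trC (x * y) = trC (y * x) := by
  have hx : ((x * y : QA n) : EuclideanSpace ℂ (Fin n) →ₗ[ℂ] EuclideanSpace ℂ (Fin n))
      = (x : EuclideanSpace ℂ (Fin n) →ₗ[ℂ] EuclideanSpace ℂ (Fin n)) * (y : _ →ₗ[ℂ] _) := rfl
  have hy : ((y * x : QA n) : EuclideanSpace ℂ (Fin n) →ₗ[ℂ] EuclideanSpace ℂ (Fin n))
      = (y : EuclideanSpace ℂ (Fin n) →ₗ[ℂ] EuclideanSpace ℂ (Fin n)) * (x : _ →ₗ[ℂ] _) := rfl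
  simp only [trC, hx, hy, LinearMap.trace_mul_comm]

private lemma trC_add {n : ℕ} (x y : QA n) : trC (x + y) = trC x + trC y := by simp [trC]
private lemma trC_sub {n : ℕ} (x y : QA n) : trC (x - y) = trC x - trC y := by simp [trC]
private lemma trC_smul {n : ℕ} (c : ℂ) (x : QA n) : trC (c • x) = c * trC x := by simp [trC]
private lemma trC_sum {n N : ℕ} (f : Fin N → QA n) :
    trC (∑ j : Fin N, f j) = ∑ j : Fin N, trC (f j) := by simp [trC]

/-- `L₀` commutes with the `*`-operation. -/
private lemma lindbladW_star {n N : ℕ} (v : Fin N → QA n) (ω : Fin N → ℝ) (x : QA n) :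
    star (lindbladW v ω x) = lindbladW v ω (star x) := by
  have stm : ∀ p q : QA n, star (p * q) = star q * star p := fun p q => star_mul p q
  have sts : ∀ p q : QA n, star (p - q) = star p - star q := fun p q => star_sub p q
  have sta : ∀ p q : QA n, star (p + q) = star p + star q := fun p q => star_add p q
  have stsm : ∀ (r : ℝ) (p : QA n), star ((r : ℂ) • p) = (r : ℂ) • star p := by
    intro r p
    rw [star_smul, RCLike.star_def, Complex.conj_ofReal]
  have stst : ∀ p : QA n, star (star p) = p := fun p => star_star p
  simp only [lindbladW, ← ContinuousLinearMap.mul_def, ← ContinuousLinearMap.star_eq_adjoint]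
  rw [star_sum (R := QA n)]
  refine Finset.sum_congr rfl fun j _ => ?_
  simp only [stsm, sta, sts, stm, stst]
  rw [add_comm]

set_option maxHeartbeats 1000000 in
/-- The key identity: for all `c d`, `tr((L₀ c) σ d) = tr(c σ (L₀ d))`. -/
private lemma lindblad_key {n N : ℕ} (σ : QA n) (v : Fin N → QA n) (ω : Fin N → ℝ)
    (h2' : ∀ j (x : QA n), v j * (σ * x) = (Real.exp (-ω j) : ℂ) • (σ * (v j * x)))
    (h4' : ∀ j (x : QA n), star (v j) * (v j * (σ * x)) = σ * (star (v j) * (v j * x)))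
    (τ : Fin N → Fin N) (hτ : Function.Involutive τ)
    (hτv : ∀ j : Fin N, v (τ j) = ContinuousLinearMap.adjoint (v j))
    (hτω : ∀ j : Fin N, ω (τ j) = -ω j) (c d : QA n) :
    trC ((lindbladW v ω c * σ) * d) = trC ((c * σ) * lindbladW v ω d) := by
  simp only [lindbladW, ← ContinuousLinearMap.mul_def, ← ContinuousLinearMap.star_eq_adjoint]
  rw [Finset.sum_mul, Finset.sum_mul, Finset.mul_sum, trC_sum, trC_sum]
  have main : ∀ j : Fin N,
      trC ((((Real.exp (ω j / 2) : ℂ) •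
          ((star (v j) * c - c * star (v j)) * v j + star (v j) * (c * v j - v j * c))) * σ) * d)
        = (Real.exp (-ω j / 2) : ℂ) * trC (c * (σ * (v j * (d * star (v j)))))
          + (Real.exp (-ω j / 2) : ℂ) * trC (c * (σ * (v j * (d * star (v j)))))
          - (Real.exp (ω j / 2) : ℂ) * trC (c * (σ * (star (v j) * (v j * d))))
          - (Real.exp (ω j / 2) : ℂ) * trC (c * (σ * (d * (star (v j) * v j)))) := by
    intro j
    rw [smul_mul_assoc, smul_mul_assoc, trC_smul]
    have expand : (((star (v j) * c - c * star (v j)) * v j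
            + star (v j) * (c * v j - v j * c)) * σ) * d
        = star (v j) * (c * (v j * (σ * d))) - c * (star (v j) * (v j * (σ * d)))
          + star (v j) * (c * (v j * (σ * d))) - star (v j) * (v j * (c * (σ * d))) := by
      simp only [sub_mul, add_mul, mul_sub, mul_add, mul_assoc]
      abel
    rw [expand, trC_sub, trC_add, trC_sub]
    have f1 : trC (star (v j) * (c * (v j * (σ * d))))
        = (Real.exp (-ω j) : ℂ) * trC (c * (σ * (v j * (d * star (v j))))) := by
      rw [h2' j d, mul_smul_comm, mul_smul_comm, trC_smul]
      congr 1
      rw [trC_mul_comm (star (v j)) (c * (σ * (v j * d)))]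
      simp only [mul_assoc]
    have f2 : trC (c * (star (v j) * (v j * (σ * d))))
        = trC (c * (σ * (star (v j) * (v j * d)))) := by rw [h4' j d]
    have f3 : trC (star (v j) * (v j * (c * (σ * d))))
        = trC (c * (σ * (d * (star (v j) * v j)))) := by
      rw [trC_mul_comm (star (v j)) (v j * (c * (σ * d)))]
      rw [show (v j * (c * (σ * d))) * star (v j) = v j * (c * (σ * (d * star (v j)))) by
        simp only [mul_assoc]]
      rw [trC_mul_comm (v j) (c * (σ * (d * star (v j))))]
      simp only [mul_assoc]
    rw [f1, f2, f3]
    have hre : (Real.exp (ω j / 2) : ℂ) * (Real.exp (-ω j) : ℂ)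
        = (Real.exp (-ω j / 2) : ℂ) := by
      rw [← Complex.ofReal_mul, ← Real.exp_add, show ω j / 2 + -ω j = -ω j / 2 by ring]
    linear_combination (2 * trC (c * (σ * (v j * (d * star (v j)))))) * hre
  have main' : ∀ j : Fin N,
      trC ((c * σ) * ((Real.exp (ω j / 2) : ℂ) •
          ((star (v j) * d - d * star (v j)) * v j + star (v j) * (d * v j - v j * d))))
        = (Real.exp (ω j / 2) : ℂ) * trC (c * (σ * (star (v j) * (d * v j))))
          + (Real.exp (ω j / 2) : ℂ) * trC (c * (σ * (star (v j) * (d * v j))))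
          - (Real.exp (ω j / 2) : ℂ) * trC (c * (σ * (star (v j) * (v j * d))))
          - (Real.exp (ω j / 2) : ℂ) * trC (c * (σ * (d * (star (v j) * v j)))) := by
    intro j
    rw [mul_smul_comm, trC_smul]
    have expand : (c * σ) * ((star (v j) * d - d * star (v j)) * v j
            + star (v j) * (d * v j - v j * d))
        = c * (σ * (star (v j) * (d * v j))) - c * (σ * (d * (star (v j) * v j)))
          + c * (σ * (star (v j) * (d * v j))) - c * (σ * (star (v j) * (v j * d))) := by
      simp only [sub_mul, add_mul, mul_sub, mul_add, mul_assoc]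
      abel
    rw [expand, trC_sub, trC_add, trC_sub]
    ring
  rw [Finset.sum_congr rfl fun j _ => main j, Finset.sum_congr rfl fun j _ => main' j]
  simp only [sub_eq_add_neg]
  rw [Finset.sum_add_distrib, Finset.sum_add_distrib, Finset.sum_add_distrib,
    Finset.sum_add_distrib, Finset.sum_add_distrib, Finset.sum_add_distrib]
  have hAB : ∑ j : Fin N, (Real.exp (-ω j / 2) : ℂ) * trC (c * (σ * (v j * (d * star (v j)))))
      = ∑ j : Fin N, (Real.exp (ω j / 2) : ℂ) * trC (c * (σ * (star (v j) * (d * v j)))) := by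
    rw [← Equiv.sum_comp (Function.Involutive.toPerm τ hτ)
      (fun j => (Real.exp (ω j / 2) : ℂ) * trC (c * (σ * (star (v j) * (d * v j)))))]
    refine Finset.sum_congr rfl fun j _ => ?_
    have hst : star (v (τ j)) = v j := by
      rw [hτv j, ← ContinuousLinearMap.star_eq_adjoint, star_star]
    simp only [Function.Involutive.coe_toPerm, hτω, hst, hτv,
      ← ContinuousLinearMap.star_eq_adjoint, star_star]
  rw [hAB]

set_option maxHeartbeats 1000000 in
/-- Let `σ` be a faithful state and `{v_j}` a finite collection of eigenvectors of
`Ad_σ : a ↦ σ a σ⁻¹` (with real eigenvalue exponents `ω_j`), closed under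
`*`-adjunction (there is an involution `τ` with `v_{τ j} = v_j*`, `ω_{τ j} = -ω_j`).
Then `L₀ a = Σ_j e^{ω_j/2}([v_j*,a]v_j + v_j*[a,v_j])` is self-adjoint with respect
to the GNS inner product `⟨a,b⟩_σ = tr(a* σ b)`. -/
theorem lindblad_eigvec_selfadjoint (n N : ℕ) (σ σinv : QA n)
    (hσpos : σ.IsPositive) (hσtr : trC σ = 1)
    (hσinv : σ ∘L σinv = 1) (hσinv' : σinv ∘L σ = 1)
    (v : Fin N → QA n) (ω : Fin N → ℝ)
    (heig : ∀ j : Fin N, (σ ∘L v j) ∘L σinv = (Real.exp (ω j) : ℂ) • v j)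
    (τ : Fin N → Fin N) (hτ : Function.Involutive τ)
    (hτv : ∀ j : Fin N, v (τ j) = ContinuousLinearMap.adjoint (v j))
    (hτω : ∀ j : Fin N, ω (τ j) = -ω j) :
    ∀ a b : QA n,
      trC ((ContinuousLinearMap.adjoint (lindbladW v ω a) ∘L σ) ∘L b)
        = trC ((ContinuousLinearMap.adjoint a ∘L σ) ∘L lindbladW v ω b) := by
  intro a b
  -- eigenvector commutation relations for `σ`
  have h1 : ∀ j, σ * v j = (Real.exp (ω j) : ℂ) • (v j * σ) := by
    intro j
    have h := heig j
    have h0 : σinv * σ = 1 := by simpa [← ContinuousLinearMap.mul_def] using hσinv'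
    simp only [← ContinuousLinearMap.mul_def] at h
    have h' : (σ * v j * σinv) * σ = ((Real.exp (ω j) : ℂ) • v j) * σ := by rw [h]
    simpa [mul_assoc, h0, smul_mul_assoc] using h'
  have h2 : ∀ j, v j * σ = (Real.exp (-ω j) : ℂ) • (σ * v j) := by
    intro j
    rw [h1 j, smul_smul, ← Complex.ofReal_mul, ← Real.exp_add]
    simp
  have h3 : ∀ j, star (v j) * σ = (Real.exp (ω j) : ℂ) • (σ * star (v j)) := by
    intro j
    have h := h2 (τ j)
    rw [hτv j, hτω j, neg_neg, ← ContinuousLinearMap.star_eq_adjoint] at h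
    exact h
  have h2' : ∀ j (x : QA n), v j * (σ * x) = (Real.exp (-ω j) : ℂ) • (σ * (v j * x)) := by
    intro j x; rw [← mul_assoc, h2 j, smul_mul_assoc, mul_assoc]
  have h3' : ∀ j (x : QA n), star (v j) * (σ * x)
      = (Real.exp (ω j) : ℂ) • (σ * (star (v j) * x)) := by
    intro j x; rw [← mul_assoc, h3 j, smul_mul_assoc, mul_assoc]
  have h4' : ∀ j (x : QA n), star (v j) * (v j * (σ * x)) = σ * (star (v j) * (v j * x)) := by
    intro j x
    rw [h2' j x, mul_smul_comm, h3' j (v j * x), smul_smul, ← Complex.ofReal_mul, ← Real.exp_add]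
    simp
  simp only [← ContinuousLinearMap.mul_def, ← ContinuousLinearMap.star_eq_adjoint]
  rw [lindbladW_star v ω a]
  exact lindblad_key σ v ω h2' h4' τ hτ hτv hτω (star a) b
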